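/- arXiv:2211.06489 — 5 statements merged into one kernel-verified Lean document; each statement's English description precedes it below -/
import Mathlib

section
/- Let G be a group acting linearly on vector spaces X (via representation ρ) and Y (via representation ρ'). If a function h : X → GL(X) with image in ρ(G) satisfies h(ρ(g)x) = ρ(g) h(x) for all g in G and x in X, then for any function f : X → Y, the function φ(x) = ρ'(ρ⁻¹(h(x))) · f(h(x)⁻¹ x) is G-equivariant, i.e. φ(ρ(g)x) = ρ'(g) φ(x) for all g and x. -/
/-- Equivariance via a canonicalization function: if `h = ρ ∘ η` satisfies
`h(ρ(g)x) = ρ(g) h(x)`, then `φ(x) = ρ'(η x) (f (h(x)⁻¹ x))` is `G`-equivariant. -/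
theorem canonicalization_equivariant
    {G X Y : Type*} [Group G]
    [AddCommGroup X] [Module ℝ X] [AddCommGroup Y] [Module ℝ Y]
    (ρ : G →* (X ≃ₗ[ℝ] X)) (ρ' : G →* (Y ≃ₗ[ℝ] Y))
    (hρ : Function.Injective ρ)
    (η : X → G)  -- h = ρ ∘ η, so h has image in ρ(G) and ρ⁻¹(h x) = η x
    (hequiv : ∀ (g : G) (x : X), ρ (η (ρ g x)) = ρ g * ρ (η x))
    (f : X → Y) :
    ∀ (g : G) (x : X),
      ρ' (η (ρ g x)) (f ((ρ (η (ρ g x)))⁻¹ (ρ g x)))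
        = ρ' g (ρ' (η x) (f ((ρ (η x))⁻¹ x))) := by
  intro g x
  have key : η (ρ g x) = g * η x := hρ (by rw [map_mul]; exact hequiv g x)
  have h1 : ∀ (a b : X ≃ₗ[ℝ] X) (z : X), (a * b) z = a (b z) := fun _ _ _ => rfl
  have h2 : ∀ (a b : Y ≃ₗ[ℝ] Y) (z : Y), (a * b) z = a (b z) := fun _ _ _ => rfl
  have h3 : ∀ (a : X ≃ₗ[ℝ] X) (z : X), a⁻¹ (a z) = z := fun a z => a.symm_apply_apply z
  rw [key, map_mul, map_mul, mul_inv_rev, h1, h2, h3]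
end

section
/- Let K ≤ G be a subgroup. Suppose h : X → ρ(G) satisfies, for all g in G and x in X, the existence of some k in K with h(ρ(g)x) = ρ(g) h(x) ρ(k), and suppose f : X → Y is K-equivariant (f(ρ(k)x) = ρ'(k) f(x) for all k in K). Then φ(x) = h'(x) f(h(x)⁻¹ x), where h'(x) = ρ'(ρ⁻¹(h(x))), is G-equivariant. -/
/-- Partial canonicalization: if `h = ρ ∘ η` satisfies the coset condition with respect to
a subgroup `K` and `f` is `K`-equivariant, then `φ` is `G`-equivariant. -/
theorem partial_canonicalization_equivariant
    {G X Y : Type*} [Group G]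
    [AddCommGroup X] [Module ℝ X] [AddCommGroup Y] [Module ℝ Y]
    (ρ : G →* (X ≃ₗ[ℝ] X)) (ρ' : G →* (Y ≃ₗ[ℝ] Y))
    (hρ : Function.Injective ρ)
    (K : Subgroup G)
    (η : X → G)  -- h = ρ ∘ η, so h has image in ρ(G) and h'(x) = ρ'(η x)
    (hcond : ∀ (g : G) (x : X), ∃ k ∈ K, ρ (η (ρ g x)) = ρ g * ρ (η x) * ρ k)
    (f : X → Y)
    (hf : ∀ k ∈ K, ∀ x : X, f (ρ k x) = ρ' k (f x)) :
    ∀ (g : G) (x : X),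
      ρ' (η (ρ g x)) (f ((ρ (η (ρ g x)))⁻¹ (ρ g x)))
        = ρ' g (ρ' (η x) (f ((ρ (η x))⁻¹ x))) := by
  intro g x
  obtain ⟨k, hk, hkeq⟩ := hcond g x
  have heq : η (ρ g x) = g * η x * k := hρ (by simpa [map_mul] using hkeq)
  have mulap : ∀ (a b : G) (y : X), ρ (a * b) y = ρ a (ρ b y) := fun a b y => by
    rw [map_mul]; rfl
  have mulap' : ∀ (a b : G) (y : Y), ρ' (a * b) y = ρ' a (ρ' b y) := fun a b y => by
    rw [map_mul]; rfl
  have invap : ∀ (a : G) (y : X), (ρ a)⁻¹ y = ρ a⁻¹ y := fun a y => by rw [map_inv]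
  have harg : (ρ (g * η x * k))⁻¹ (ρ g x) = ρ k⁻¹ ((ρ (η x))⁻¹ x) := by
    rw [invap, invap, ← mulap, ← mulap]
    congr 1
    group
  rw [heq, harg, hf k⁻¹ (K.inv_mem hk), ← mulap',
    show g * η x * k * k⁻¹ = g * η x by group, mulap']
end

section
/- If the canonicalization function h satisfies relaxed equivariance, then the canonicalized function φ(x) = h'(x) f(h(x)⁻¹ x) satisfies relaxed equivariance: for all g₁ in G and x in X there exists g₂ in the coset g₁ G_x such that φ(ρ(g₁)x) = ρ'(g₂) φ(x). -/
/-- If the canonicalization function `h = ρ ∘ η` satisfies relaxed equivariance, then the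
canonicalized function `φ(x) = ρ'(η x) (f (h(x)⁻¹ x))` satisfies relaxed equivariance:
for all `g₁` and `x` there is `g₂ ∈ g₁ G_x` with `φ(ρ(g₁)x) = ρ'(g₂) φ(x)`. -/
theorem canonicalized_relaxed_equivariance
    {G X Y : Type*} [Group G]
    [AddCommGroup X] [Module ℝ X] [AddCommGroup Y] [Module ℝ Y]
    (ρ : G →* (X ≃ₗ[ℝ] X)) (ρ' : G →* (Y ≃ₗ[ℝ] Y))
    (hρ : Function.Injective ρ)
    (η : X → G)  -- h = ρ ∘ η, h'(x) = ρ'(η x)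
    (hrelax : ∀ (g₁ : G) (x : X), ∃ g₂ : G,
      ρ (g₁⁻¹ * g₂) x = x ∧ ρ (η (ρ g₁ x)) = ρ g₂ * ρ (η x))
    (f : X → Y) :
    ∀ (g₁ : G) (x : X), ∃ g₂ : G,
      ρ (g₁⁻¹ * g₂) x = x ∧
      ρ' (η (ρ g₁ x)) (f ((ρ (η (ρ g₁ x)))⁻¹ (ρ g₁ x)))
        = ρ' g₂ (ρ' (η x) (f ((ρ (η x))⁻¹ x))) := by
  intro g₁ x
  obtain ⟨g₂, h1, h2⟩ := hrelax g₁ x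
  have hη : η (ρ g₁ x) = g₂ * η x := by
    apply hρ
    rw [map_mul, h2]
  have hx : ρ g₂ x = ρ g₁ x := by
    have h1' : (ρ g₁).symm ((ρ g₂) x) = x := by
      have := h1; rw [map_mul, map_inv] at this; exact this
    have := congrArg (ρ g₁) h1'
    rwa [LinearEquiv.apply_symm_apply] at this
  refine ⟨g₂, h1, ?_⟩
  have harg : (ρ (η (ρ g₁ x)))⁻¹ (ρ g₁ x) = (ρ (η x))⁻¹ x := by
    rw [h2, mul_inv_rev]
    show (ρ (η x))⁻¹ ((ρ g₂)⁻¹ (ρ g₁ x)) = (ρ (η x))⁻¹ x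
    rw [← hx]
    exact congrArg _ ((ρ g₂).symm_apply_apply x)
  rw [harg, hη, map_mul]
  rfl
end

section
/- Optimization-based canonicalization satisfies relaxed equivariance: let s : ρ(G) × X → ℝ satisfy (1) s(ρ(g), ρ(g₁)x) = s(ρ(g₁)⁻¹ρ(g), x) for all g, g₁ in G and x in X, and (2) for every x there exists g₁ in G such that argmin over ρ(g) ∈ ρ(G) of s(ρ(g), x) is contained in ρ(G_x g₁). Then any selection h(x) ∈ argmin_{ρ(g)} s(ρ(g), x) satisfies relaxed equivariance: for all g₁ and x there exists g₂ ∈ g₁ G_x with h(ρ(g₁)x) = ρ(g₂) h(x). -/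
/-- Optimization-based canonicalization satisfies relaxed equivariance. -/
theorem optimization_canonicalization_relaxed_equivariance
    {G X : Type*} [Group G] [AddCommGroup X] [Module ℝ X]
    (ρ : G →* (X ≃ₗ[ℝ] X))
    (s : (X ≃ₗ[ℝ] X) → X → ℝ)
    -- condition (1): s(ρ(g), ρ(g₁)x) = s(ρ(g₁)⁻¹ρ(g), x)
    (hs : ∀ (g g₁ : G) (x : X), s (ρ g) (ρ g₁ x) = s ((ρ g₁)⁻¹ * ρ g) x)
    -- condition (2): the argmin over ρ(G) is contained in ρ(G_x g₁) for some g₁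
    (hmin : ∀ x : X, ∃ g₁ : G,
      ∀ L ∈ {L ∈ Set.range ρ | ∀ g' : G, s L x ≤ s (ρ g') x},
        ∃ g : G, ρ g x = x ∧ L = ρ (g * g₁))
    (h : X → (X ≃ₗ[ℝ] X))
    -- h(x) is a selection from the argmin over ρ(G)
    (hsel : ∀ x : X, h x ∈ {L ∈ Set.range ρ | ∀ g' : G, s L x ≤ s (ρ g') x}) :
    ∀ (g₁ : G) (x : X), ∃ g₂ : G,
      ρ (g₁⁻¹ * g₂) x = x ∧ h (ρ g₁ x) = ρ g₂ * h x := by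
  have act : ∀ (u v : G) (y : X), ρ (u * v) y = ρ u (ρ v y) := by
    intro u v y; rw [map_mul]; rfl
  intro g₁ x
  obtain ⟨⟨g₀, hg₀⟩, hxmin⟩ := hsel x
  obtain ⟨c, hc⟩ := hmin (ρ g₁ x)
  obtain ⟨a, ha, hA⟩ := hc _ (hsel (ρ g₁ x))
  have hB : ρ (g₁ * g₀) ∈
      {L ∈ Set.range ρ | ∀ g' : G, s L (ρ g₁ x) ≤ s (ρ g') (ρ g₁ x)} := by
    refine ⟨⟨g₁ * g₀, rfl⟩, fun g' => ?_⟩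
    have h1 : s (ρ (g₁ * g₀)) (ρ g₁ x) = s (ρ g₀) x := by
      rw [hs (g₁ * g₀) g₁ x, ← map_inv, ← map_mul, inv_mul_cancel_left]
    have h2 : s (ρ g') (ρ g₁ x) = s (ρ (g₁⁻¹ * g')) x := by
      rw [hs g' g₁ x, ← map_inv, ← map_mul]
    rw [h1, h2, hg₀]
    exact hxmin _
  obtain ⟨b, hb, hBe⟩ := hc _ hB
  have hb' : ρ b⁻¹ (ρ g₁ x) = ρ g₁ x := by
    conv_lhs => rw [← hb, ← act, inv_mul_cancel, map_one]
    rfl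
  refine ⟨a * b⁻¹ * g₁, ?_, ?_⟩
  · calc ρ (g₁⁻¹ * (a * b⁻¹ * g₁)) x
        = ρ g₁⁻¹ (ρ a (ρ b⁻¹ (ρ g₁ x))) := by rw [show g₁⁻¹ * (a * b⁻¹ * g₁) = g₁⁻¹ * (a * (b⁻¹ * g₁)) by group,
            act, act, act]
      _ = ρ g₁⁻¹ (ρ g₁ x) := by rw [hb', ha]
      _ = x := by rw [← act, inv_mul_cancel, map_one]; rfl
  · rw [hA, ← hg₀, ← map_mul]
    have key : ρ (a * b⁻¹ * g₁ * g₀) = ρ (a * b⁻¹) * ρ (g₁ * g₀) := by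
      rw [← map_mul]; congr 1; group
    rw [key, hBe, ← map_mul]
    congr 1; group
end

section
/- If the argmin of s(·, x) is a singleton for every x and s satisfies s(ρ(g), ρ(g₁)x) = s(ρ(g₁)⁻¹ρ(g), x), then the resulting canonicalization function h(x) = argmin_{ρ(g)} s(ρ(g), x) is strictly G-equivariant: h(ρ(g₁)x) = ρ(g₁) h(x) for all g₁ and x. -/
/-- If the argmin of `s(·, x)` over `ρ(G)` is the singleton `{h x}` for every `x` and `s`
satisfies the equivariance condition, then `h` is strictly `G`-equivariant. -/
theorem singleton_argmin_strict_equivariance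
    {G X : Type*} [Group G] [AddCommGroup X] [Module ℝ X]
    (ρ : G →* (X ≃ₗ[ℝ] X))
    (s : (X ≃ₗ[ℝ] X) → X → ℝ)
    (hs : ∀ (g g₁ : G) (x : X), s (ρ g) (ρ g₁ x) = s ((ρ g₁)⁻¹ * ρ g) x)
    (h : X → (X ≃ₗ[ℝ] X))
    (hsel : ∀ x : X, {L ∈ Set.range ρ | ∀ g' : G, s L x ≤ s (ρ g') x} = {h x}) :
    ∀ (g₁ : G) (x : X), h (ρ g₁ x) = ρ g₁ * h x := by
  intro g₁ x
  -- h x is in the argmin set at x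
  have hx : h x ∈ {L ∈ Set.range ρ | ∀ g' : G, s L x ≤ s (ρ g') x} := by
    rw [hsel x]; rfl
  obtain ⟨⟨g₀, hg₀⟩, hmin⟩ := hx
  have key : ρ g₁ * h x ∈ {L ∈ Set.range ρ | ∀ g' : G, s L (ρ g₁ x) ≤ s (ρ g') (ρ g₁ x)} := by
    constructor
    · exact ⟨g₁ * g₀, by rw [map_mul, hg₀]⟩
    · intro g'
      have h1 : s (ρ g₁ * h x) (ρ g₁ x) = s (h x) x := by
        rw [← hg₀, ← map_mul, hs, ← map_inv, ← map_mul, inv_mul_cancel_left]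
      have h2 : s (ρ g') (ρ g₁ x) = s (ρ (g₁⁻¹ * g')) x := by
        rw [hs, map_mul, map_inv]
      rw [h1, h2]
      exact hmin (g₁⁻¹ * g')
  rw [hsel (ρ g₁ x)] at key
  exact key.symm
end
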